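/- arXiv:1902.10788 — 3 statements merged into one kernel-verified Lean document; each statement's English description precedes it below -/
import Mathlib

section
/- For the n-gonal bipyramid BP_n with n = 2k and k even, there are exactly four zigzags up to reversal, each of length 3n/2. -/
open Finset
open scoped Classical

/-- A combinatorial triangulation: a finite collection of (triangular) faces,
each given as a finite set of vertices. -/
structure Triangulation (V : Type) where
  faces : Finset (Finset V)

namespace Triangulation

variable {V : Type} [DecidableEq V] (T : Triangulation V)

/-- The edges: the 2-element subsets of faces. -/
def edges : Finset (Finset V) := T.faces.biUnion fun f => f.powersetCard 2

/-- The vertices actually used by the triangulation. -/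
def verts : Finset V := T.faces.sup id

/-- The combinatorial axioms of a triangulation of a closed surface:
faces are triangles, every edge lies in exactly two faces, and two distinct
faces meet in at most an edge. -/
def IsProper : Prop :=
  (∀ f ∈ T.faces, f.card = 3) ∧
  (∀ e ∈ T.edges, (T.faces.filter fun f => e ⊆ f).card = 2) ∧
  (∀ f ∈ T.faces, ∀ g ∈ T.faces, f ≠ g → (f ∩ g).card ≤ 2)

/-- The underlying (simple) graph of the triangulation. -/
def graph : SimpleGraph V where
  Adj x y := x ≠ y ∧ ({x, y} : Finset V) ∈ T.edges
  symm := ⟨fun x y h => ⟨h.1.symm, by rw [Finset.pair_comm y x]; exact h.2⟩⟩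
  loopless := ⟨fun x h => h.1 rfl⟩

/-- A zigzag: a bi-infinite periodic sequence of edges `e i` together with the
face `f i` containing the consecutive edges `e i` and `e (i+1)`, such that
consecutive faces are distinct and edges two apart are disjoint.
`head i` is the (unique) common vertex of `e i` and `e (i+1)`; thus the `i`-th
traversal goes from `head (i-1)` to `head i`. -/
structure Zigzag where
  e : ℤ → Finset V
  f : ℤ → Finset V
  head : ℤ → V
  e_mem : ∀ i, e i ∈ T.edges
  f_mem : ∀ i, f i ∈ T.faces
  sub_left : ∀ i, e i ⊆ f i
  sub_right : ∀ i, e (i + 1) ⊆ f i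
  edges_ne : ∀ i, e i ≠ e (i + 1)
  faces_ne : ∀ i, f i ≠ f (i + 1)
  disj : ∀ i, Disjoint (e i) (e (i + 2))
  inter_eq : ∀ i, e i ∩ e (i + 1) = {head i}
  exists_period : ∃ n : ℕ, 0 < n ∧ ∀ i, e (i + n) = e i ∧ f (i + n) = f i ∧ head (i + n) = head i

namespace Zigzag

variable {T}

/-- The length of a zigzag: the minimal period of its edge sequence. -/
noncomputable def length (Z : Zigzag T) : ℕ :=
  sInf {n : ℕ | 0 < n ∧ ∀ i, Z.e (i + n) = Z.e i}

/-- How many times the edge `a` occurs in one (minimal) period of `Z`. -/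
noncomputable def mult (Z : Zigzag T) (a : Finset V) : ℕ :=
  ((Finset.range Z.length).filter fun i => Z.e (i : ℤ) = a).card

/-- The direction (tail, head) of the `i`-th traversal of `Z`. -/
def dir (Z : Zigzag T) (i : ℤ) : V × V := (Z.head (i - 1), Z.head i)

/-- Two zigzags are the same cyclic sequence up to rotation or rotation
combined with reversal. -/
def Equiv (Z W : Zigzag T) : Prop :=
  (∃ k : ℤ, ∀ i, W.e i = Z.e (i + k)) ∨ (∃ k : ℤ, ∀ i, W.e i = Z.e (k - i))

end Zigzag

/-- A triangulation is z-knotted if it has a single zigzag up to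
rotation and reversal. -/
def IsZKnotted : Prop := Nonempty (Zigzag T) ∧ ∀ Z W : Zigzag T, Z.Equiv W

/-- A z-orientation: a collection of pairwise non-equivalent zigzags which
double covers the edge set. -/
structure ZOrientation where
  zigzags : List (Zigzag T)
  cover : ∀ a ∈ T.edges, (zigzags.map fun Z => Z.mult a).sum = 2
  nonequiv : zigzags.Pairwise fun Z W => ¬ Z.Equiv W

namespace ZOrientation

variable {T}

/-- All traversals of the edge `a` by the distinguished zigzags go in the
direction `d`. -/
def dirOf (τ : ZOrientation T) (a : Finset V) (d : V × V) : Prop :=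
  ∀ Z ∈ τ.zigzags, ∀ i : ℤ, Z.e i = a → Z.dir i = d

/-- An edge of type II: both traversals go in the same direction. -/
def TypeII (τ : ZOrientation T) (a : Finset V) : Prop := ∃ d, τ.dirOf a d

/-- An edge of type I: the two traversals go in different directions. -/
def TypeI (τ : ZOrientation T) (a : Finset V) : Prop := ¬ τ.TypeII a

/-- A vertex of type I: it belongs only to edges of type I. -/
def VertexTypeI (τ : ZOrientation T) (x : V) : Prop :=
  ∀ a ∈ T.edges, x ∈ a → τ.TypeI a

/-- A vertex of type II: it belongs to some edge of type II. -/
def VertexTypeII (τ : ZOrientation T) (x : V) : Prop :=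
  ∃ a ∈ T.edges, x ∈ a ∧ τ.TypeII a

/-- A face of type I: exactly one of its edges is of type II
(the other two being of type I). -/
def FaceTypeI (τ : ZOrientation T) (f : Finset V) : Prop :=
  ∃! a : Finset V, a ∈ f.powersetCard 2 ∧ τ.TypeII a

/-- A face of type II: all its edges are of type II and their directions
form a directed cycle. -/
def FaceTypeII (τ : ZOrientation T) (f : Finset V) : Prop :=
  ∃ x y z : V, f = {x, y, z} ∧ x ≠ y ∧ y ≠ z ∧ x ≠ z ∧
    τ.dirOf {x, y} (x, y) ∧ τ.dirOf {y, z} (y, z) ∧ τ.dirOf {z, x} (z, x)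

/-- A homogeneous zigzag: it contains precisely two edges of type I after each
edge of type II, i.e. it is a cyclic sequence of blocks (II, I, I). -/
def Homogeneous (τ : ZOrientation T) (Z : Zigzag T) : Prop :=
  ∃ k : ℤ, ∀ i : ℤ, τ.TypeII (Z.e (k + 3 * i)) ∧
    τ.TypeI (Z.e (k + 3 * i + 1)) ∧ τ.TypeI (Z.e (k + 3 * i + 2))

/-- The in-degree of a vertex in the digraph of type II edges. -/
noncomputable def inDeg (τ : ZOrientation T) (x : V) : ℕ :=
  (T.edges.filter fun a => τ.TypeII a ∧ ∃ u, a = {u, x} ∧ τ.dirOf a (u, x)).card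

/-- The out-degree of a vertex in the digraph of type II edges. -/
noncomputable def outDeg (τ : ZOrientation T) (x : V) : ℕ :=
  (T.edges.filter fun a => τ.TypeII a ∧ ∃ u, a = {x, u} ∧ τ.dirOf a (x, u)).card

/-- A special pair: two type II edges with a common vertex which are
interleaved in the zigzag `Z` as a, b, a, b within one period. -/
def SpecialPair (τ : ZOrientation T) (Z : Zigzag T) (a b : Finset V) : Prop :=
  a ≠ b ∧ (a ∩ b).Nonempty ∧ τ.TypeII a ∧ τ.TypeII b ∧
  ∃ i₁ i₂ i₃ i₄ : ℤ, i₁ < i₂ ∧ i₂ < i₃ ∧ i₃ < i₄ ∧ i₄ < i₁ + (Z.length : ℤ) ∧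
    Z.e i₁ = a ∧ Z.e i₂ = b ∧ Z.e i₃ = a ∧ Z.e i₄ = b

/-- Two special pairs `c₁,c₂` and `t₁,t₂` are concordant: the zigzag
interleaves them in the cyclic pattern c₁,t₁,c₂,t₂,c₁,t₁,c₂,t₂. -/
def Concordant (τ : ZOrientation T) (Z : Zigzag T) (c₁ c₂ t₁ t₂ : Finset V) : Prop :=
  τ.SpecialPair Z c₁ c₂ ∧ τ.SpecialPair Z t₁ t₂ ∧
  (c₁ ≠ t₁ ∧ c₁ ≠ t₂ ∧ c₂ ≠ t₁ ∧ c₂ ≠ t₂) ∧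
  ∃ i₁ i₂ i₃ i₄ i₅ i₆ i₇ i₈ : ℤ,
    i₁ < i₂ ∧ i₂ < i₃ ∧ i₃ < i₄ ∧ i₄ < i₅ ∧ i₅ < i₆ ∧ i₆ < i₇ ∧ i₇ < i₈ ∧
    i₈ < i₁ + (Z.length : ℤ) ∧
    Z.e i₁ = c₁ ∧ Z.e i₂ = t₁ ∧ Z.e i₃ = c₂ ∧ Z.e i₄ = t₂ ∧
    Z.e i₅ = c₁ ∧ Z.e i₆ = t₁ ∧ Z.e i₇ = c₂ ∧ Z.e i₈ = t₂

end ZOrientation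

end Triangulation

/-- The `n`-gonal bipyramid: two apexes (the `Bool` vertices) joined to every
vertex of an `n`-cycle. -/
def BP (n : ℕ) [NeZero n] : Triangulation (Bool ⊕ ZMod n) where
  faces := Finset.univ.image fun p : Bool × ZMod n =>
    ({Sum.inl p.1, Sum.inr p.2, Sum.inr (p.2 + 1)} : Finset (Bool ⊕ ZMod n))

/-!
In a triangulation whose faces are triangles and whose edges lie in at most two faces, a zigzag
is determined by two consecutive edges: the next face is the other face through the last edge,
and the next edge is the side of that face avoiding the common vertex of the previous two.
In `BP n` the vertex walk `s, s + 1, N, s + 2, s + 3, S, s + 4, …` (rim vertices interleaved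
with the two apexes `N`, `S` alternately) is a zigzag, and every pair of adjacent sides of a face
occurs consecutively in such a walk, so these walks give all zigzags. Shifting a walk by three
steps advances it two places along the rim and swaps the apexes, and a walk never runs backwards
along the rim; hence the walks from `(b, s)` and `(b', s')` are equivalent iff
`(b', s') = (b + j, s + 2j)` for some `j`. For `n = 2k` with `k` even this leaves the four
classes `b, s ∈ {0, 1}`, and every walk has minimal period `3k`.
-/

namespace Triangulation

variable {V : Type} [DecidableEq V] {T : Triangulation V}

theorem card_eq_two_of_mem_edges {a : Finset V} (ha : a ∈ T.edges) : a.card = 2 := by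
  obtain ⟨f, -, hf⟩ := mem_biUnion.1 ha
  exact (mem_powersetCard.1 hf).2

namespace Zigzag

theorem Equiv.symm {Z W : Zigzag T} (h : Z.Equiv W) : W.Equiv Z := by
  rcases h with ⟨k, h⟩ | ⟨k, h⟩
  · exact Or.inl ⟨-k, fun i => by rw [h, neg_add_cancel_right]⟩
  · exact Or.inr ⟨k, fun i => by rw [h, sub_sub_cancel]⟩

theorem Equiv.trans {Z W X : Zigzag T} (h₁ : Z.Equiv W) (h₂ : W.Equiv X) : Z.Equiv X := by
  rcases h₁ with ⟨k, h₁⟩ | ⟨k, h₁⟩ <;> rcases h₂ with ⟨l, h₂⟩ | ⟨l, h₂⟩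
  · exact Or.inl ⟨l + k, fun i => by rw [h₂, h₁, add_assoc]⟩
  · exact Or.inr ⟨l + k, fun i => by rw [h₂, h₁, sub_add_eq_add_sub]⟩
  · exact Or.inr ⟨k - l, fun i => by rw [h₂, h₁, sub_add_eq_sub_sub_swap]⟩
  · exact Or.inl ⟨k - l, fun i => by rw [h₂, h₁]; ring_nf⟩

theorem Equiv.periodic {Z W : Zigzag T} (h : Z.Equiv W) {p : ℤ} (hp : Function.Periodic Z.e p) :
    Function.Periodic W.e p := by
  rcases h with ⟨k, h⟩ | ⟨k, h⟩ <;> intro i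
  · rw [h, h, add_right_comm, hp]
  · rw [h, h, ← hp (k - (i + p)), sub_add_eq_sub_sub, sub_add_cancel]

theorem Equiv.length_eq {Z W : Zigzag T} (h : Z.Equiv W) : W.length = Z.length := by
  unfold length
  congr 1
  ext p
  exact and_congr_right fun _ => ⟨h.symm.periodic, h.periodic⟩

def reverse (Z : Zigzag T) : Zigzag T where
  e i := Z.e (-i)
  f i := Z.f (-i - 1)
  head i := Z.head (-i - 1)
  e_mem _ := Z.e_mem _
  f_mem _ := Z.f_mem _
  sub_left i := by simpa using Z.sub_right (-i - 1)
  sub_right i := by simpa [sub_eq_add_neg, add_comm] using Z.sub_left (-i - 1)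
  edges_ne i := by simpa [sub_eq_add_neg, add_comm] using (Z.edges_ne (-i - 1)).symm
  faces_ne i := by
    simpa [sub_eq_add_neg, add_comm, add_left_comm] using (Z.faces_ne (-i - 2)).symm
  disj i := by simpa [sub_eq_add_neg, add_comm] using (Z.disj (-i - 2)).symm
  inter_eq i := by simpa [inter_comm, sub_eq_add_neg, add_comm] using Z.inter_eq (-i - 1)
  exists_period := by
    obtain ⟨p, hp, h⟩ := Z.exists_period
    refine ⟨p, hp, fun i => ?_⟩
    have h₁ := h (-(i + p))
    have h₂ := h (-(i + p) - 1)
    simp only [show -(i + p) + p = -i by ring, show -(i + p) - 1 + p = -i - 1 by ring] at h₁ h₂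
    exact ⟨h₁.1.symm, h₂.2.1.symm, h₂.2.2.symm⟩

def ofVertices (v : ℤ → V) (hface : ∀ i, {v i, v (i + 1), v (i + 2)} ∈ T.faces)
    (hne₁ : ∀ i, v i ≠ v (i + 1)) (hne₂ : ∀ i, v i ≠ v (i + 2)) (hne₃ : ∀ i, v i ≠ v (i + 3))
    (hper : ∃ p : ℕ, 0 < p ∧ Function.Periodic v p) : Zigzag T where
  e i := {v i, v (i + 1)}
  f i := {v i, v (i + 1), v (i + 2)}
  head i := v (i + 1)
  e_mem i := mem_biUnion.2 ⟨_, hface i, mem_powersetCard.2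
    ⟨by simp [insert_subset_iff], card_pair (hne₁ i)⟩⟩
  f_mem := hface
  sub_left i := by simp [insert_subset_iff]
  sub_right i := by simp [add_assoc]
  edges_ne i h := by
    have : v i ∈ ({v (i + 1), v (i + 1 + 1)} : Finset V) := h ▸ by simp
    simp only [mem_insert, mem_singleton, add_assoc, one_add_one_eq_two] at this
    exact this.elim (hne₁ i) (hne₂ i)
  faces_ne i h := by
    have : v i ∈ ({v (i + 1), v (i + 1 + 1), v (i + 1 + 2)} : Finset V) := h ▸ by simp
    simp only [mem_insert, mem_singleton, add_assoc] at this
    norm_num at this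
    exact this.elim (hne₁ i) (Or.elim · (hne₂ i) (hne₃ i))
  disj i := by
    have h₁ := hne₁ (i + 1)
    have h₂ := hne₂ (i + 1)
    simp only [add_assoc] at h₁ h₂ ⊢
    norm_num at h₁ h₂ ⊢
    exact ⟨⟨(hne₂ i).symm, Ne.symm h₁⟩, (hne₃ i).symm, Ne.symm h₂⟩
  inter_eq i := by
    rw [insert_inter_of_notMem, singleton_inter_of_mem (mem_insert_self _ _)]
    simp only [mem_insert, mem_singleton, add_assoc, one_add_one_eq_two]
    exact not_or.2 ⟨hne₁ i, hne₂ i⟩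
  exists_period := by
    obtain ⟨p, hp, h⟩ := hper
    refine ⟨p, hp, fun i => ?_⟩
    simp [add_right_comm _ (p : ℤ), h i, h (i + 1), h (i + 2)]

theorem f_eq_union (hcard : ∀ f ∈ T.faces, f.card = 3) (Z : Zigzag T) (i : ℤ) :
    Z.f i = Z.e i ∪ Z.e (i + 1) := by
  have hunion : (Z.e i ∪ Z.e (i + 1)).card = 3 := by
    have := card_union_add_card_inter (Z.e i) (Z.e (i + 1))
    rw [Z.inter_eq, card_singleton, card_eq_two_of_mem_edges (Z.e_mem i),
      card_eq_two_of_mem_edges (Z.e_mem (i + 1))] at this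
    omega
  refine (eq_of_subset_of_card_le (union_subset (Z.sub_left i) (Z.sub_right i))
    ?_).symm
  rw [hunion, hcard _ (Z.f_mem i)]

theorem e_add_two_eq_sdiff (hcard : ∀ f ∈ T.faces, f.card = 3) (Z : Zigzag T) (i : ℤ) :
    Z.e (i + 2) = Z.f (i + 1) \ Z.e i := by
  have hsub : Z.e (i + 2) ⊆ Z.f (i + 1) := by simpa [add_assoc] using Z.sub_right (i + 1)
  have hhead : Z.head i ∈ Z.e i ∩ Z.e (i + 1) := by rw [Z.inter_eq]; exact mem_singleton_self _
  have hhead_f : Z.head i ∈ Z.f (i + 1) := Z.sub_left (i + 1) (mem_inter.1 hhead).2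
  refine eq_of_subset_of_card_le (subset_sdiff.2 ⟨hsub, (Z.disj i).symm⟩) ?_
  calc (Z.f (i + 1) \ Z.e i).card
      ≤ ((Z.f (i + 1)).erase (Z.head i)).card :=
        card_le_card fun x hx => mem_erase.2
          ⟨fun h => (mem_sdiff.1 hx).2 (h ▸ (mem_inter.1 hhead).1), (mem_sdiff.1 hx).1⟩
    _ = (Z.e (i + 2)).card := by
      rw [card_erase_of_mem hhead_f, hcard _ (Z.f_mem _), card_eq_two_of_mem_edges (Z.e_mem _)]

theorem other_face_unique (htwo : ∀ a ∈ T.edges, #{f ∈ T.faces | a ⊆ f} ≤ 2)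
    {a F G G' : Finset V} (ha : a ∈ T.edges) (hF : F ∈ T.faces) (hG : G ∈ T.faces) (hG' : G' ∈ T.faces)
    (haF : a ⊆ F) (haG : a ⊆ G) (haG' : a ⊆ G') (hGF : G ≠ F) (hG'F : G' ≠ F) : G = G' := by
  by_contra hGG'
  have hsub : {F, G, G'} ⊆ {f ∈ T.faces | a ⊆ f} := by
    simp only [insert_subset_iff, singleton_subset_iff, mem_filter]
    exact ⟨⟨hF, haF⟩, ⟨hG, haG⟩, ⟨hG', haG'⟩⟩
  have := (card_le_card hsub).trans (htwo a ha)
  rw [card_insert_of_notMem (by simp [hGF.symm, hG'F.symm]),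
    card_pair hGG'] at this
  omega

theorem e_add_two_eq_of_e_eq (hcard : ∀ f ∈ T.faces, f.card = 3)
    (htwo : ∀ a ∈ T.edges, #{f ∈ T.faces | a ⊆ f} ≤ 2) {Z W : Zigzag T} {a c : ℤ}
    (h₀ : W.e c = Z.e a) (h₁ : W.e (c + 1) = Z.e (a + 1)) : W.e (c + 2) = Z.e (a + 2) := by
  have hf : W.f c = Z.f a := by rw [f_eq_union hcard, f_eq_union hcard, h₀, h₁]
  have hf' : W.f (c + 1) = Z.f (a + 1) :=
    other_face_unique htwo (Z.e_mem (a + 1)) (Z.f_mem a) (W.f_mem _) (Z.f_mem _) (Z.sub_right a)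
      (h₁ ▸ W.sub_left _) (Z.sub_left _) (hf ▸ (W.faces_ne c).symm) (Z.faces_ne a).symm
  rw [e_add_two_eq_sdiff hcard, e_add_two_eq_sdiff hcard, hf', h₀]

theorem e_eq_of_e_zero_eq_of_e_one_eq (hcard : ∀ f ∈ T.faces, f.card = 3)
    (htwo : ∀ a ∈ T.edges, #{f ∈ T.faces | a ⊆ f} ≤ 2) {Z W : Zigzag T} {k : ℤ}
    (h₀ : W.e 0 = Z.e k) (h₁ : W.e 1 = Z.e (1 + k)) (i : ℤ) : W.e i = Z.e (i + k) := by
  suffices ∀ i, W.e i = Z.e (i + k) ∧ W.e (i + 1) = Z.e (i + 1 + k) from (this i).1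
  intro i
  induction i using Int.inductionOn' (b := 0) with
  | zero => simpa using ⟨h₀, h₁⟩
  | succ i _ ih =>
    refine ⟨ih.2, ?_⟩
    have := e_add_two_eq_of_e_eq hcard htwo ih.1 (by rw [ih.2, add_right_comm])
    convert this using 2 <;> ring
  | pred i _ ih =>
    refine ⟨?_, by rw [sub_add_cancel, ih.1]⟩
    have := e_add_two_eq_of_e_eq hcard htwo (Z := Z.reverse) (W := W.reverse)
      (c := -i - 1) (a := -(i + 1 + k))
      (by change W.e _ = Z.e _; convert ih.2 using 2 <;> ring)
      (by change W.e _ = Z.e _; convert ih.1 using 2 <;> ring)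
    change W.e _ = Z.e _ at this
    convert this using 2 <;> ring

theorem equiv_of_consecutive (hcard : ∀ f ∈ T.faces, f.card = 3)
    (htwo : ∀ a ∈ T.edges, #{f ∈ T.faces | a ⊆ f} ≤ 2) {Z W : Zigzag T} {a : ℤ}
    (h : W.e 0 = Z.e a ∧ W.e 1 = Z.e (a + 1) ∨ W.e 0 = Z.e (a + 1) ∧ W.e 1 = Z.e a) :
    Z.Equiv W := by
  rcases h with ⟨h₀, h₁⟩ | ⟨h₀, h₁⟩
  · exact Or.inl ⟨a, e_eq_of_e_zero_eq_of_e_one_eq hcard htwo h₀ (by rw [h₁, add_comm])⟩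
  · refine Or.inr ⟨a + 1, fun i => ?_⟩
    have := e_eq_of_e_zero_eq_of_e_one_eq hcard htwo (Z := Z.reverse) (k := -(a + 1))
      (by change _ = Z.e _; rw [neg_neg, h₀]) (by change _ = Z.e _; rw [h₁]; ring_nf) i
    change _ = Z.e _ at this
    rw [this]
    ring_nf

end Zigzag
end Triangulation

namespace BP

open Triangulation

section

variable {n : ℕ}

def apex (x : ZMod 2) : Bool ⊕ ZMod n := .inl (decide (x = 1))

def face (x : ZMod 2) (m : ZMod n) : Finset (Bool ⊕ ZMod n) := {apex x, .inr m, .inr (m + 1)}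

theorem apex_injective : Function.Injective (apex (n := n)) := by
  intro x y h
  simp only [apex, Sum.inl.injEq, decide_eq_decide] at h
  revert x y
  decide

@[simp]
theorem apex_ne_inr (x : ZMod 2) (m : ZMod n) : apex x ≠ .inr m := Sum.inl_ne_inr

@[simp]
theorem inr_ne_apex (x : ZMod 2) (m : ZMod n) : .inr m ≠ apex x := Sum.inr_ne_inl

theorem one_ne_zero_of_two_le (hn : 2 ≤ n) : (1 : ZMod n) ≠ 0 := by
  simpa using (ZMod.natCast_eq_zero_iff 1 n).not.2 (Nat.not_dvd_of_pos_of_lt one_pos hn)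

theorem two_ne_zero_of_three_le (hn : 3 ≤ n) : (2 : ZMod n) ≠ 0 := by
  simpa using (ZMod.natCast_eq_zero_iff 2 n).not.2 (Nat.not_dvd_of_pos_of_lt two_pos hn)

theorem card_face (hn : 2 ≤ n) (x : ZMod 2) (m : ZMod n) : (face x m).card = 3 := by
  have : m ≠ m + 1 := fun h => one_ne_zero_of_two_le hn (by linear_combination -h)
  rw [face, card_insert_of_notMem (by simp), card_pair (by simpa using this)]

theorem eq_or_eq_or_eq_of_subset_face {y : Finset (Bool ⊕ ZMod n)} {x : ZMod 2} {m : ZMod n}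
    (hy : y.card = 2) (hyF : y ⊆ face x m) :
    y = {.inr m, .inr (m + 1)} ∨ y = {apex x, .inr m} ∨ y = {apex x, .inr (m + 1)} := by
  obtain ⟨p, q, hpq, rfl⟩ := card_eq_two.1 hy
  simp only [face, insert_subset_iff, mem_insert, mem_singleton, singleton_subset_iff] at hyF
  obtain ⟨hp | hp | hp, hq | hq | hq⟩ := hyF <;> subst hp hq <;> simp_all [pair_comm]

theorem eq_of_rim_subset_face (hn : 3 ≤ n) {x : ZMod 2} {m m' : ZMod n}
    (h : {.inr m, .inr (m + 1)} ⊆ face x m') : m' = m := by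
  have h₁ := one_ne_zero_of_two_le (by omega : 2 ≤ n)
  simp only [face, insert_subset_iff, mem_insert, mem_singleton, singleton_subset_iff,
    Sum.inr.injEq, inr_ne_apex, false_or] at h
  obtain ⟨rfl | hm, hm' | hm'⟩ := h
  · exact absurd (by linear_combination hm') h₁
  · rfl
  · exact absurd (by linear_combination hm' - hm) (two_ne_zero_of_three_le hn)
  · exact absurd (by linear_combination hm' - hm) h₁

theorem eq_of_rim_eq (hn : 3 ≤ n) {m m' : ZMod n}
    (h : ({.inr m, .inr (m + 1)} : Finset (Bool ⊕ ZMod n)) = {.inr m', .inr (m' + 1)}) :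
    m = m' :=
  eq_of_rim_subset_face hn (x := 0) (h ▸ by simp [face])

theorem eq_of_spoke_subset_face {x x' : ZMod 2} {m m' : ZMod n}
    (h : {apex x, .inr m} ⊆ face x' m') : x' = x ∧ (m' = m ∨ m' = m - 1) := by
  simp only [face, insert_subset_iff, mem_insert, mem_singleton, singleton_subset_iff,
    Sum.inr.injEq, inr_ne_apex, apex_ne_inr, or_false, false_or] at h
  exact ⟨apex_injective h.1.symm, h.2.imp Eq.symm fun h => eq_sub_of_add_eq h.symm⟩

/-- The vertex walk `s, s + 1, apex b, s + 2, s + 3, apex (b + 1), s + 4, …` of a zigzag. -/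
def modelVertex (b : ZMod 2) (s : ZMod n) (i : ℤ) : Bool ⊕ ZMod n :=
  if i % 3 = 0 then .inr (s + 2 * (i / 3 : ℤ))
  else if i % 3 = 1 then .inr (s + 2 * (i / 3 : ℤ) + 1)
  else apex (b + (i / 3 : ℤ))

theorem modelVertex_add_three_mul (b : ZMod 2) (s : ZMod n) (i j : ℤ) :
    modelVertex b s (i + 3 * j) = modelVertex (b + (j : ZMod 2)) (s + 2 * (j : ZMod n)) i := by
  have hmod : (i + 3 * j) % 3 = i % 3 := by omega
  have hdiv : (i + 3 * j) / 3 = i / 3 + j := by omega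
  simp only [modelVertex, hmod, hdiv, Int.cast_add]
  split_ifs <;> ring_nf

theorem periodic_modelVertex (b : ZMod 2) (s : ZMod n) {j : ℤ} (h₂ : (j : ZMod 2) = 0)
    (hn : 2 * (j : ZMod n) = 0) : Function.Periodic (modelVertex b s) (3 * j) := fun i => by
  rw [modelVertex_add_three_mul, h₂, hn, add_zero, add_zero]

theorem exists_modelVertex_add_eq (b : ZMod 2) (s : ZMod n) (i : ℤ) :
    ∃ (b' : ZMod 2) (s' : ZMod n) (r : ℤ), (r = 0 ∨ r = 1 ∨ r = 2) ∧
      ∀ d, modelVertex b s (i + d) = modelVertex b' s' (r + d) :=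
  ⟨b + (i / 3 : ℤ), s + 2 * (i / 3 : ℤ), i % 3, by omega,
    fun d => by rw [← modelVertex_add_three_mul]; congr 1; omega⟩

theorem modelVertex_ne (hn : 3 ≤ n) (b : ZMod 2) (s : ZMod n) (i : ℤ) {d : ℤ}
    (hd : d = 1 ∨ d = 2 ∨ d = 3) : modelVertex b s i ≠ modelVertex b s (i + d) := by
  have h₁ := one_ne_zero_of_two_le (by omega : 2 ≤ n)
  have h₂ := two_ne_zero_of_three_le hn
  have h₁₂ : (1 : ZMod n) ≠ 2 := fun h => h₁ (by linear_combination -h)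
  obtain ⟨b, s, r, hr, h⟩ := exists_modelVertex_add_eq b s i
  have h₀ := h 0
  rw [add_zero, add_zero] at h₀
  rw [h₀, h]
  rcases hr with rfl | rfl | rfl <;> rcases hd with rfl | rfl | rfl <;>
    simp [modelVertex, apex_injective.eq_iff, h₁, h₂, h₁₂]

end

variable {n : ℕ} [NeZero n]

theorem mem_faces_iff {F : Finset (Bool ⊕ ZMod n)} :
    F ∈ (BP n).faces ↔ ∃ x m, F = face x m := by
  simp only [BP, mem_image, mem_univ, true_and, Prod.exists]
  constructor
  · rintro ⟨t, m, rfl⟩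
    exact ⟨if t then 1 else 0, m, by cases t <;> rfl⟩
  · rintro ⟨x, m, rfl⟩
    exact ⟨_, m, rfl⟩

theorem card_of_mem_faces (hn : 2 ≤ n) : ∀ F ∈ (BP n).faces, F.card = 3 := fun F hF => by
  obtain ⟨x, m, rfl⟩ := mem_faces_iff.1 hF
  exact card_face hn x m

theorem card_faces_containing_le_two (hn : 3 ≤ n) :
    ∀ a ∈ (BP n).edges, #{F ∈ (BP n).faces | a ⊆ F} ≤ 2 := by
  intro a ha
  suffices ∃ G G', {F ∈ (BP n).faces | a ⊆ F} ⊆ {G, G'} from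
    let ⟨G, G', h⟩ := this; (card_le_card h).trans card_le_two
  have hspoke (x : ZMod 2) (m : ZMod n) :
      {F ∈ (BP n).faces | {apex x, .inr m} ⊆ F} ⊆ {face x m, face x (m - 1)} := by
    intro G hG
    obtain ⟨hG, hsub⟩ := mem_filter.1 hG
    obtain ⟨x', m', rfl⟩ := mem_faces_iff.1 hG
    obtain ⟨rfl, rfl | rfl⟩ := eq_of_spoke_subset_face hsub <;> simp
  obtain ⟨F, hF, haF⟩ := mem_biUnion.1 ha
  obtain ⟨haF, hcard⟩ := mem_powersetCard.1 haF
  obtain ⟨x, m, rfl⟩ := mem_faces_iff.1 hF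
  rcases eq_or_eq_or_eq_of_subset_face hcard haF with rfl | rfl | rfl
  · refine ⟨face x m, face (x + 1) m, fun G hG => ?_⟩
    obtain ⟨hG, hsub⟩ := mem_filter.1 hG
    obtain ⟨x', m', rfl⟩ := mem_faces_iff.1 hG
    obtain rfl := eq_of_rim_subset_face hn hsub
    have hx : ∀ x x' : ZMod 2, x' = x ∨ x' = x + 1 := by decide
    rcases hx x x' with rfl | rfl <;> simp
  · exact ⟨_, _, hspoke x m⟩
  · exact ⟨_, _, hspoke x (m + 1)⟩

theorem modelVertex_mem_faces (b : ZMod 2) (s : ZMod n) (i : ℤ) :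
    {modelVertex b s i, modelVertex b s (i + 1), modelVertex b s (i + 2)} ∈ (BP n).faces := by
  obtain ⟨b, s, r, hr, h⟩ := exists_modelVertex_add_eq b s i
  have h₀ := h 0
  rw [add_zero, add_zero] at h₀
  rw [h₀, h, h]
  refine mem_faces_iff.2 ?_
  rcases hr with rfl | rfl | rfl
  · exact ⟨b, s, by ext; simp [modelVertex, face]; tauto⟩
  · exact ⟨b, s + 1, by ext; simp [modelVertex, face, add_assoc, one_add_one_eq_two]; tauto⟩
  · exact ⟨b, s + 2, by ext; simp [modelVertex, face]⟩

def model (hn : 3 ≤ n) (b : ZMod 2) (s : ZMod n) : Zigzag (BP n) :=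
  Zigzag.ofVertices (modelVertex b s) (modelVertex_mem_faces b s)
    (fun i => modelVertex_ne hn b s i (by norm_num)) (fun i => modelVertex_ne hn b s i (by norm_num))
    (fun i => modelVertex_ne hn b s i (by norm_num))
    ⟨6 * n, by have := NeZero.pos n; omega, by
      convert periodic_modelVertex b s (j := 2 * n) (by push_cast; exact mul_eq_zero_of_left rfl _)
        (by push_cast; rw [ZMod.natCast_self]; ring) using 1
      push_cast
      ring⟩

theorem model_e {hn : 3 ≤ n} (b : ZMod 2) (s : ZMod n) (i : ℤ) :
    (model hn b s).e i = {modelVertex b s i, modelVertex b s (i + 1)} := rfl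

theorem model_e_add_three_mul {hn : 3 ≤ n} (b : ZMod 2) (s : ZMod n) (i j : ℤ) :
    (model hn b s).e (i + 3 * j) = (model hn (b + (j : ZMod 2)) (s + 2 * (j : ZMod n))).e i := by
  rw [model_e, model_e, add_right_comm, modelVertex_add_three_mul, modelVertex_add_three_mul]

@[simp]
theorem model_e_zero {hn : 3 ≤ n} (b : ZMod 2) (s : ZMod n) :
    (model hn b s).e 0 = {.inr s, .inr (s + 1)} := by simp [model_e, modelVertex]

@[simp]
theorem model_e_one {hn : 3 ≤ n} (b : ZMod 2) (s : ZMod n) :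
    (model hn b s).e 1 = {apex b, .inr (s + 1)} := by simp [model_e, modelVertex, pair_comm]

@[simp]
theorem model_e_two {hn : 3 ≤ n} (b : ZMod 2) (s : ZMod n) :
    (model hn b s).e 2 = {apex b, .inr (s + 2)} := by simp [model_e, modelVertex]

@[simp]
theorem model_e_three {hn : 3 ≤ n} (b : ZMod 2) (s : ZMod n) :
    (model hn b s).e 3 = {.inr (s + 2), .inr (s + 2 + 1)} := by simp [model_e, modelVertex]

theorem exists_of_model_e_eq_rim (hn : 3 ≤ n) {b : ZMod 2} {s σ : ZMod n} {t : ℤ}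
    (h : (model hn b s).e t = {.inr σ, .inr (σ + 1)}) : ∃ j : ℤ, t = 3 * j ∧ σ = s + 2 * j := by
  obtain ⟨j, r, hr, rfl⟩ : ∃ j r, (r = 0 ∨ r = 1 ∨ r = 2) ∧ t = r + 3 * j :=
    ⟨t / 3, t % 3, by omega, by omega⟩
  rw [model_e_add_three_mul] at h
  rcases hr with rfl | rfl | rfl
  · exact ⟨j, by ring, (eq_of_rim_eq hn (by simpa using h)).symm⟩
  all_goals
    have : apex (b + j) ∈ ({.inr σ, .inr (σ + 1)} : Finset (Bool ⊕ ZMod n)) := h ▸ by simp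
    simp at this

theorem model_equiv_iff (hn : 3 ≤ n) {b b' : ZMod 2} {s s' : ZMod n} :
    (model hn b s).Equiv (model hn b' s') ↔ ∃ j : ℤ, s' = s + 2 * j ∧ b' = b + j := by
  refine ⟨?_, fun ⟨j, hs, hb⟩ => Or.inl ⟨3 * j, fun i => by rw [model_e_add_three_mul, hs, hb]⟩⟩
  rintro (⟨t, h⟩ | ⟨t, h⟩)
  · obtain ⟨j, rfl, hs⟩ := exists_of_model_e_eq_rim hn (by simpa using (h 0).symm)
    refine ⟨j, hs, ?_⟩
    have h₁ := h 1
    rw [model_e_add_three_mul, model_e_one, model_e_one] at h₁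
    have : apex b' ∈ ({apex (b + j), .inr (s + 2 * j + 1)} : Finset (Bool ⊕ ZMod n)) :=
      h₁ ▸ by simp
    simpa [apex_injective.eq_iff] using this
  -- Read backwards, the rim edge `{s', s' + 1}` would be followed by a spoke at `s'`, not `s' + 1`.
  · obtain ⟨j, rfl, rfl⟩ := exists_of_model_e_eq_rim hn (by simpa using (h 0).symm)
    have h₁ := h 1
    rw [show 3 * j - 1 = 2 + 3 * (j - 1) by ring, model_e_add_three_mul, model_e_two,
      model_e_one] at h₁
    have : .inr (s + 2 * j + 1) ∈
        ({apex (b + ↑(j - 1)), .inr (s + 2 * ↑(j - 1) + 2)} : Finset (Bool ⊕ ZMod n)) :=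
      h₁ ▸ by simp
    simp only [mem_insert, inr_ne_apex, mem_singleton, Sum.inr.injEq, false_or] at this
    exact absurd (by push_cast at this; linear_combination this)
      (one_ne_zero_of_two_le (by omega : 2 ≤ n))

theorem exists_model_equiv (hn : 3 ≤ n) (W : Zigzag (BP n)) : ∃ b s, (model hn b s).Equiv W := by
  have hcard := card_of_mem_faces (by omega : 2 ≤ n)
  have htwo := card_faces_containing_le_two hn
  obtain ⟨x, m, hF⟩ := mem_faces_iff.1 (W.f_mem 0)
  have h₀ := eq_or_eq_or_eq_of_subset_face (card_eq_two_of_mem_edges (W.e_mem 0))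
    (hF ▸ W.sub_left 0)
  have h₁ := eq_or_eq_or_eq_of_subset_face (card_eq_two_of_mem_edges (W.e_mem 1))
    (by simpa [hF] using W.sub_right 0)
  have hne : W.e 0 ≠ W.e 1 := by simpa using W.edges_ne 0
  have hm : m - 1 + 2 = m + 1 := by ring
  rcases h₀ with h₀ | h₀ | h₀ <;> rcases h₁ with h₁ | h₁ | h₁
  · exact absurd (h₀.trans h₁.symm) hne
  · exact ⟨x, m - 2, Zigzag.equiv_of_consecutive hcard htwo (a := 2) (by simp [h₀, h₁])⟩
  · exact ⟨x, m, Zigzag.equiv_of_consecutive hcard htwo (a := 0) (by simp [h₀, h₁])⟩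
  · exact ⟨x, m - 2, Zigzag.equiv_of_consecutive hcard htwo (a := 2) (by simp [h₀, h₁])⟩
  · exact absurd (h₀.trans h₁.symm) hne
  · exact ⟨x, m - 1, Zigzag.equiv_of_consecutive hcard htwo (a := 1) (by simp [h₀, h₁, hm])⟩
  · exact ⟨x, m, Zigzag.equiv_of_consecutive hcard htwo (a := 0) (by simp [h₀, h₁])⟩
  · exact ⟨x, m - 1, Zigzag.equiv_of_consecutive hcard htwo (a := 1) (by simp [h₀, h₁, hm])⟩
  · exact absurd (h₀.trans h₁.symm) hne

theorem exists_lt_two_model_equiv (hn : 3 ≤ n) (b : ZMod 2) (s : ZMod n) :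
    ∃ (b' : ZMod 2) (c : ℕ), c < 2 ∧ (model hn b' c).Equiv (model hn b s) := by
  refine ⟨b - ((s.val / 2 : ℕ) : ℤ), s.val % 2, Nat.mod_lt _ two_pos,
    (model_equiv_iff hn).2 ⟨(s.val / 2 : ℕ), ?_, by ring⟩⟩
  conv_lhs => rw [← ZMod.natCast_zmod_val s, ← Nat.mod_add_div s.val 2]
  simp only [Int.cast_natCast, Nat.cast_add, Nat.cast_mul, Nat.cast_ofNat]

theorem eq_of_model_equiv (hn : 3 ≤ n) {k : ℕ} (hnk : n = 2 * k) (hk : Even k) {b b' : ZMod 2}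
    {c c' : ℕ} (hc : c < 2) (hc' : c' < 2) (h : (model hn b c).Equiv (model hn b' c')) :
    b = b' ∧ c = c' := by
  obtain ⟨j, hs, hb⟩ := (model_equiv_iff hn).1 h
  have hdvd : (n : ℤ) ∣ c' - c - 2 * j := by
    rw [← ZMod.intCast_zmod_eq_zero_iff_dvd]
    push_cast
    linear_combination hs
  obtain ⟨k', rfl⟩ := hk
  obtain ⟨q, hq⟩ := hdvd
  rw [hnk] at hq
  push_cast at hq
  obtain rfl : c = c' := by
    have : (2 : ℤ) ∣ c' - c := ⟨j + (k' + k') * q, by linarith⟩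
    omega
  have hj : (2 : ℤ) ∣ j := ⟨-(k' * q), by linarith⟩
  rw [hb, (ZMod.intCast_zmod_eq_zero_iff_dvd j 2).2 hj, add_zero]
  exact ⟨rfl, rfl⟩

theorem length_model (hn : 3 ≤ n) {k : ℕ} (hnk : n = 2 * k) (hk : Even k) (b : ZMod 2)
    (s : ZMod n) : (model hn b s).length = 3 * k := by
  have hper : Function.Periodic (model hn b s).e (3 * k : ℕ) := fun i => by
    have h₂ : ((k : ℤ) : ZMod 2) = 0 := by simpa using ZMod.natCast_eq_zero_iff_even.2 hk
    have hn₀ : 2 * ((k : ℤ) : ZMod n) = 0 := by simpa [hnk] using ZMod.natCast_self n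
    rw [Nat.cast_mul, Nat.cast_ofNat, model_e_add_three_mul, h₂, hn₀, add_zero, add_zero]
  refine le_antisymm (Nat.sInf_le ⟨by omega, hper⟩) (le_csInf ⟨_, by omega, hper⟩ ?_)
  rintro p ⟨hp, hperp⟩
  obtain ⟨j, hj, hs⟩ := exists_of_model_e_eq_rim hn (by simpa using hperp 0)
  have h2j : ((2 * k : ℕ) : ℤ) ∣ 2 * j := by
    rw [← hnk, ← ZMod.intCast_zmod_eq_zero_iff_dvd]
    push_cast
    linear_combination -hs
  have hkj : (k : ℤ) ≤ j :=
    Int.le_of_dvd (by omega) ((mul_dvd_mul_iff_left two_ne_zero).1 (by exact_mod_cast h2j))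
  omega

end BP

open Triangulation BP in
/-- For the `n`-gonal bipyramid `BP n` with `n = 2k` and `k`
even, there are exactly four zigzags up to reversal, each of length `3n/2`. -/
theorem stmt5 (n k : ℕ) [NeZero n] (hnk : n = 2 * k) (hk : Even k) (h2 : 2 ≤ k) :
    (∃ Z₁ Z₂ Z₃ Z₄ : (BP n).Zigzag,
      ¬ Z₁.Equiv Z₂ ∧ ¬ Z₁.Equiv Z₃ ∧ ¬ Z₁.Equiv Z₄ ∧
      ¬ Z₂.Equiv Z₃ ∧ ¬ Z₂.Equiv Z₄ ∧ ¬ Z₃.Equiv Z₄ ∧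
      ∀ W : (BP n).Zigzag, Z₁.Equiv W ∨ Z₂.Equiv W ∨ Z₃.Equiv W ∨ Z₄.Equiv W) ∧
    ∀ W : (BP n).Zigzag, W.length = 3 * k := by
  have hn : 3 ≤ n := by omega
  refine ⟨⟨model hn 0 (0 : ℕ), model hn 1 (0 : ℕ), model hn 0 (1 : ℕ), model hn 1 (1 : ℕ),
    ?_, ?_, ?_, ?_, ?_, ?_, fun W => ?_⟩, fun W => ?_⟩
  iterate 6
    exact fun h => absurd (eq_of_model_equiv hn hnk hk (by norm_num) (by norm_num) h) (by decide)
  · obtain ⟨b, s, hW⟩ := exists_model_equiv hn W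
    obtain ⟨b', c, hc, hbs⟩ := exists_lt_two_model_equiv hn b s
    have hb : ∀ b' : ZMod 2, b' = 0 ∨ b' = 1 := by decide
    rcases hb b' with rfl | rfl <;> obtain rfl | rfl : c = 0 ∨ c = 1 := by omega
    all_goals simp only [hbs.trans hW, true_or, or_true]
  · obtain ⟨b, s, hW⟩ := exists_model_equiv hn W
    rw [hW.length_eq, length_model hn hnk hk]
end

section
/- Given a fixed z-orientation of a triangulation, every face satisfies exactly one of: (I) it has exactly two edges of type I and one edge of type II, or (II) all three of its edges are of type II and their directions form a directed 3-cycle around the face. -/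
open Finset
open scoped Classical

/-! Fix a face `{x, y, z}` and let `a`, `b`, `c` count the traversals of `{x, y}`, `{y, z}`,
`{z, x}` (two each) that follow the cyclic orientation `x → y → z → x`; an edge is of type II
exactly when its count is `0` or `2`. A zigzag passing through the face runs along two of its edges
consecutively, turning around their common corner, so both traversals are cyclic or both are
anticyclic. These passages pair up the six traversals, always joining different edges. Hence
`a + b + c` is even, and neither the cyclic nor the anticyclic traversals all lie on one edge.
What remains is `a = b = c ∈ {0, 2}`, where the three type II edges form a directed 3-cycle, or
exactly one count different from `1`, i.e. exactly one type II edge. -/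

namespace Finset

theorem even_card_of_involution {ι : Type*} {s : Finset ι} (g : ι → ι)
    (hg : ∀ a ∈ s, g a ∈ s) (hgg : ∀ a ∈ s, g (g a) = a) (hne : ∀ a ∈ s, g a ≠ a) :
    Even s.card := by
  rw [← ZMod.natCast_eq_zero_iff_even, card_eq_sum_ones, Nat.cast_sum, Nat.cast_one]
  exact sum_involution (fun a _ => g a) (fun _ _ => by decide) (fun a ha _ => hne a ha) hg hgg

variable {α : Type*} [DecidableEq α]

lemma triple_rotate (x y z : α) : ({y, z, x} : Finset α) = {x, y, z} := by
  ext
  simp only [mem_insert, mem_singleton]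
  tauto

lemma pair_ne_pair {x y z : α} (hxy : x ≠ y) (hxz : x ≠ z) : ({x, y} : Finset α) ≠ {y, z} :=
  fun h => by
    have hx : x ∈ ({y, z} : Finset α) := h ▸ mem_insert_self x {y}
    simp [hxy, hxz] at hx

lemma eq_or_eq_or_eq_of_subset_triple {x y z : α} {p : Finset α} (hp : p ⊆ {x, y, z})
    (hcard : p.card = 2) : p = {x, y} ∨ p = {y, z} ∨ p = {z, x} := by
  obtain ⟨u, v, huv, rfl⟩ := card_eq_two.mp hcard
  simp only [insert_subset_iff, mem_insert, mem_singleton, singleton_subset_iff] at hp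
  rcases hp with ⟨rfl | rfl | rfl, rfl | rfl | rfl⟩ <;> simp_all [pair_comm]

end Finset

theorem Function.Periodic.map_emod {β : Type*} {f : ℤ → β} {c : ℤ} (h : Function.Periodic f c)
    (i : ℤ) : f (i % c) = f i := by
  rw [Int.emod_def, mul_comm]
  exact h.sub_int_mul_eq _

namespace Triangulation

variable {V : Type}

def IsCyclic (x y z : V) (d : V × V) : Prop := d = (x, y) ∨ d = (y, z) ∨ d = (z, x)

lemma isCyclic_rotate (x y z : V) : IsCyclic y z x = IsCyclic x y z := by
  ext d
  unfold IsCyclic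
  tauto

variable [DecidableEq V] {T : Triangulation V}

lemma isCyclic_iff_isCyclic {x y z a b c : V} (hxy : x ≠ y) (hyz : y ≠ z) (hxz : x ≠ z)
    (hab : a ≠ b) (hbc : b ≠ c) (hac : a ≠ c) (ha : a ∈ ({x, y, z} : Finset V))
    (hb : b ∈ ({x, y, z} : Finset V)) (hc : c ∈ ({x, y, z} : Finset V)) :
    IsCyclic x y z (a, b) ↔ IsCyclic x y z (b, c) := by
  simp only [mem_insert, mem_singleton] at ha hb hc
  rcases ha with rfl | rfl | rfl <;> rcases hb with rfl | rfl | rfl <;>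
    rcases hc with rfl | rfl | rfl <;> simp_all [IsCyclic, eq_comm]

lemma card_of_mem_edges {p : Finset V} (hp : p ∈ T.edges) : p.card = 2 := by
  obtain ⟨_, _, h⟩ := mem_biUnion.mp hp
  exact (mem_powersetCard.mp h).2

lemma mem_edges_of_subset {F p : Finset V} (hF : F ∈ T.faces) (hp : p ⊆ F) (hcard : p.card = 2) :
    p ∈ T.edges :=
  mem_biUnion.mpr ⟨F, hF, mem_powersetCard.mpr ⟨hp, hcard⟩⟩

lemma pair_mem_edges {F : Finset V} {u v : V} (hF : F ∈ T.faces) (huv : u ≠ v) (hu : u ∈ F)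
    (hv : v ∈ F) : ({u, v} : Finset V) ∈ T.edges :=
  mem_edges_of_subset hF (insert_subset_iff.mpr ⟨hu, singleton_subset_iff.mpr hv⟩) (card_pair huv)

lemma IsProper.eq_or_eq_of_subset (hT : T.IsProper) {p g₁ g₂ g₃ : Finset V} (hp : p ∈ T.edges)
    (h₁ : g₁ ∈ T.faces) (h₂ : g₂ ∈ T.faces) (h₃ : g₃ ∈ T.faces)
    (hp₁ : p ⊆ g₁) (hp₂ : p ⊆ g₂) (hp₃ : p ⊆ g₃) (hne : g₁ ≠ g₂) :
    g₃ = g₁ ∨ g₃ = g₂ := by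
  have hsub : ({g₁, g₂} : Finset (Finset V)) ⊆ T.faces.filter fun f => p ⊆ f := by
    simp [insert_subset_iff, h₁, h₂, hp₁, hp₂]
  have heq := eq_of_subset_of_card_le hsub (by rw [hT.2.1 p hp, card_pair hne])
  have hg₃ : g₃ ∈ ({g₁, g₂} : Finset (Finset V)) := heq ▸ mem_filter.mpr ⟨h₃, hp₃⟩
  simpa using hg₃

namespace Zigzag

variable (Z : Zigzag T)

lemma card_e (i : ℤ) : (Z.e i).card = 2 := card_of_mem_edges (Z.e_mem i)

lemma head_mem_e (i : ℤ) : Z.head i ∈ Z.e i :=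
  (mem_inter.mp (Z.inter_eq i ▸ mem_singleton_self _)).1

lemma head_mem_e_succ (i : ℤ) : Z.head i ∈ Z.e (i + 1) :=
  (mem_inter.mp (Z.inter_eq i ▸ mem_singleton_self _)).2

lemma head_pred_mem_e (i : ℤ) : Z.head (i - 1) ∈ Z.e i := by
  simpa using Z.head_mem_e_succ (i - 1)

lemma head_pred_ne (i : ℤ) : Z.head (i - 1) ≠ Z.head i := by
  intro h
  have hd := Z.disj (i - 1)
  rw [show i - 1 + 2 = i + 1 by ring] at hd
  exact disjoint_left.mp hd (h ▸ Z.head_mem_e (i - 1)) (Z.head_mem_e_succ i)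

lemma e_eq_pair (i : ℤ) : Z.e i = {Z.head (i - 1), Z.head i} :=
  (eq_of_subset_of_card_le (by simp [insert_subset_iff, Z.head_pred_mem_e, Z.head_mem_e])
    (by rw [Z.card_e, card_pair (Z.head_pred_ne i)])).symm

lemma f_eq_union_s6 (hT : T.IsProper) (i : ℤ) : Z.f i = Z.e i ∪ Z.e (i + 1) := by
  have hcard : (Z.e i ∪ Z.e (i + 1)).card = 3 := by
    have := card_union_add_card_inter (Z.e i) (Z.e (i + 1))
    rw [Z.inter_eq i, Z.card_e, Z.card_e, card_singleton] at this
    omega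
  exact (eq_of_subset_of_card_le (union_subset (Z.sub_left i) (Z.sub_right i))
    (by rw [hcard, hT.1 _ (Z.f_mem i)])).symm

lemma length_pos_and_periodic : 0 < Z.length ∧ Function.Periodic Z.e Z.length := by
  obtain ⟨n, hn, h⟩ := Z.exists_period
  exact Nat.sInf_mem (s := {n : ℕ | 0 < n ∧ ∀ i, Z.e (i + n) = Z.e i}) ⟨n, hn, fun i => (h i).1⟩

lemma length_pos : 0 < Z.length := Z.length_pos_and_periodic.1

lemma e_periodic : Function.Periodic Z.e Z.length := Z.length_pos_and_periodic.2

lemma head_periodic : Function.Periodic Z.head Z.length := fun i =>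
  singleton_injective <| by
    rw [← Z.inter_eq, ← Z.inter_eq, add_right_comm, Z.e_periodic, Z.e_periodic]

lemma dir_periodic : Function.Periodic Z.dir Z.length := fun i => by
  rw [dir, dir, ← sub_add_eq_add_sub, Z.head_periodic, Z.head_periodic]

lemma f_periodic (hT : T.IsProper) : Function.Periodic Z.f Z.length := fun i => by
  rw [Z.f_eq_union_s6 hT, Z.f_eq_union_s6 hT, add_right_comm, Z.e_periodic, Z.e_periodic]

lemma mult_eq_card (p : Finset V) :
    Z.mult p = ((Ico 0 (Z.length : ℤ)).filter fun i => Z.e i = p).card := by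
  unfold mult
  congr 1
  ext i
  simp only [mem_filter, mem_Ico, and_congr_left_iff]
  intro _
  -- `mult` filters `range length` after lifting it to `Finset ℤ` through the `Finset` monad
  simp only [bind_def, mem_sup, mem_range, pure_def, mem_singleton]
  exact ⟨fun ⟨n, hn, hi⟩ => by omega, fun ⟨h0, hlt⟩ => ⟨i.toNat, by omega, by omega⟩⟩

lemma isCyclic_dir_succ_iff {x y z : V} (hxy : x ≠ y) (hyz : y ≠ z) (hxz : x ≠ z) {i : ℤ}
    (hfi : Z.f i = {x, y, z}) :
    IsCyclic x y z (Z.dir (i + 1)) ↔ IsCyclic x y z (Z.dir i) := by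
  have hne : Z.head (i - 1) ≠ Z.head (i + 1) := fun h => Z.edges_ne i <| by
    rw [Z.e_eq_pair, Z.e_eq_pair (i + 1), add_sub_cancel_right, h, pair_comm]
  rw [dir, dir, add_sub_cancel_right]
  exact (isCyclic_iff_isCyclic hxy hyz hxz (Z.head_pred_ne i)
    (by simpa using Z.head_pred_ne (i + 1)) hne (hfi ▸ Z.sub_left i (Z.head_pred_mem_e i))
    (hfi ▸ Z.sub_left i (Z.head_mem_e i)) (hfi ▸ Z.sub_right i (Z.head_mem_e (i + 1)))).symm

/-- If `Z.e i` is an edge of the face `F`, then `Z` passes through `F` right after or right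
before `e i`, and `Z.across F i` is the index of the other edge of `F` on that passage. -/
def across (F : Finset V) (i : ℤ) : ℤ := i + if Z.f i = F then 1 else -1

lemma across_emod (hT : T.IsProper) (F : Finset V) (i : ℤ) :
    Z.across F (i % Z.length) % Z.length = Z.across F i % Z.length := by
  rw [across, across, (Z.f_periodic hT).map_emod, Int.emod_add_emod]

lemma e_across_ne (F : Finset V) (i : ℤ) : Z.e (Z.across F i) ≠ Z.e i := by
  unfold across
  split_ifs
  · exact (Z.edges_ne i).symm
  · simpa [← sub_eq_add_neg] using Z.edges_ne (i - 1)

variable {Z} (hT : T.IsProper) {F : Finset V} (hF : F ∈ T.faces) {i : ℤ} (he : Z.e i ⊆ F)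
include hT hF he

lemma f_pred_eq_of_f_ne (hfi : Z.f i ≠ F) : Z.f (i - 1) = F := by
  have hsub : Z.e i ⊆ Z.f (i - 1) := by simpa using Z.sub_right (i - 1)
  have hne : Z.f (i - 1) ≠ Z.f i := by simpa using Z.faces_ne (i - 1)
  rcases hT.eq_or_eq_of_subset (Z.e_mem i) (Z.f_mem _) (Z.f_mem i) hF hsub (Z.sub_left i) he hne
    with h | h
  · exact h.symm
  · exact absurd h.symm hfi

lemma e_across_subset : Z.e (Z.across F i) ⊆ F := by
  unfold across
  split_ifs with hfi
  · exact hfi ▸ Z.sub_right i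
  · simpa [← sub_eq_add_neg] using f_pred_eq_of_f_ne hT hF he hfi ▸ Z.sub_left (i - 1)

lemma across_across : Z.across F (Z.across F i) = i := by
  unfold across
  by_cases hfi : Z.f i = F
  · have hne : Z.f (i + 1) ≠ F := hfi ▸ (Z.faces_ne i).symm
    simp [hfi, hne]
  · simp [hfi, ← sub_eq_add_neg, f_pred_eq_of_f_ne hT hF he hfi]

lemma isCyclic_dir_across {x y z : V} (hxy : x ≠ y) (hyz : y ≠ z) (hxz : x ≠ z)
    (hxyz : F = {x, y, z}) :
    IsCyclic x y z (Z.dir (Z.across F i)) ↔ IsCyclic x y z (Z.dir i) := by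
  unfold across
  split_ifs with hfi
  · exact Z.isCyclic_dir_succ_iff hxy hyz hxz (hfi.trans hxyz)
  · have h := Z.isCyclic_dir_succ_iff hxy hyz hxz ((f_pred_eq_of_f_ne hT hF he hfi).trans hxyz)
    rw [sub_add_cancel] at h
    rw [← sub_eq_add_neg, h]

end Zigzag

namespace ZOrientation

variable (τ : T.ZOrientation)

/-- The occurrences `⟨k, i⟩` of `p` as the edge `e i` of the `k`-th zigzag of `τ`, with `i` in
the window `[0, length)`. -/
noncomputable def occ (p : Finset V) : Finset (Σ _ : Fin τ.zigzags.length, ℤ) :=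
  univ.sigma fun k => (Ico 0 (τ.zigzags[k].length : ℤ)).filter fun i => τ.zigzags[k].e i = p

noncomputable def occFace (F : Finset V) : Finset (Σ _ : Fin τ.zigzags.length, ℤ) :=
  univ.sigma fun k => (Ico 0 (τ.zigzags[k].length : ℤ)).filter fun i => τ.zigzags[k].e i ⊆ F

def dirAt (s : Σ _ : Fin τ.zigzags.length, ℤ) : V × V := τ.zigzags[s.1].dir s.2

noncomputable def cyclicCount (x y z : V) (p : Finset V) : ℕ :=
  ((τ.occ p).filter fun s => IsCyclic x y z (τ.dirAt s)).card

variable {τ}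

lemma mem_occ {p : Finset V} {s : Σ _ : Fin τ.zigzags.length, ℤ} :
    s ∈ τ.occ p ↔ 0 ≤ s.2 ∧ s.2 < τ.zigzags[s.1].length ∧ τ.zigzags[s.1].e s.2 = p := by
  simp [occ, and_assoc]

lemma mem_occFace {F : Finset V} {s : Σ _ : Fin τ.zigzags.length, ℤ} :
    s ∈ τ.occFace F ↔ 0 ≤ s.2 ∧ s.2 < τ.zigzags[s.1].length ∧ τ.zigzags[s.1].e s.2 ⊆ F := by
  simp [occFace, and_assoc]

lemma card_occ {p : Finset V} (hp : p ∈ T.edges) : (τ.occ p).card = 2 := by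
  rw [occ, card_sigma, ← τ.cover p hp, ← Fin.sum_univ_fun_getElem]
  simp [Zigzag.mult_eq_card]

lemma disjoint_occ {p q : Finset V} (h : p ≠ q) : Disjoint (τ.occ p) (τ.occ q) :=
  disjoint_left.mpr fun _ hp hq => h ((mem_occ.mp hp).2.2.symm.trans (mem_occ.mp hq).2.2)

lemma occFace_triple (x y z : V) :
    τ.occFace {x, y, z} = τ.occ {x, y} ∪ τ.occ {y, z} ∪ τ.occ {z, x} := by
  ext s
  simp only [mem_union, mem_occFace, mem_occ]
  constructor
  · rintro ⟨h0, hlt, he⟩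
    rcases eq_or_eq_or_eq_of_subset_triple he (τ.zigzags[s.1].card_e s.2) with h | h | h
    · exact .inl (.inl ⟨h0, hlt, h⟩)
    · exact .inl (.inr ⟨h0, hlt, h⟩)
    · exact .inr ⟨h0, hlt, h⟩
  · rintro ((⟨h0, hlt, he⟩ | ⟨h0, hlt, he⟩) | ⟨h0, hlt, he⟩) <;>
      refine ⟨h0, hlt, he ▸ ?_⟩ <;> simp [insert_subset_iff]

lemma dirOf_iff {p : Finset V} {d : V × V} :
    τ.dirOf p d ↔ ∀ s ∈ τ.occ p, τ.dirAt s = d := by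
  refine ⟨fun h s hs => h _ (List.getElem_mem _) s.2 (mem_occ.mp hs).2.2, fun h Z hZ i hi => ?_⟩
  obtain ⟨k, hk, rfl⟩ := List.mem_iff_getElem.mp hZ
  have hL : (0 : ℤ) < τ.zigzags[k].length := by exact_mod_cast τ.zigzags[k].length_pos
  have := h ⟨⟨k, hk⟩, i % τ.zigzags[k].length⟩ (mem_occ.mpr ⟨Int.emod_nonneg _ hL.ne',
    Int.emod_lt_of_pos _ hL, by simpa [τ.zigzags[k].e_periodic.map_emod] using hi⟩)
  simpa [dirAt, τ.zigzags[k].dir_periodic.map_emod] using this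

lemma dirAt_eq_or_eq {u v : V} {s : Σ _ : Fin τ.zigzags.length, ℤ} (hs : s ∈ τ.occ {u, v}) :
    τ.dirAt s = (u, v) ∨ τ.dirAt s = (v, u) := by
  have hne := τ.zigzags[s.1].head_pred_ne s.2
  have he := (mem_occ.mp hs).2.2
  rw [Zigzag.e_eq_pair] at he
  have h₁ : τ.zigzags[s.1].head (s.2 - 1) ∈ ({u, v} : Finset V) := he ▸ mem_insert_self _ _
  have h₂ : τ.zigzags[s.1].head s.2 ∈ ({u, v} : Finset V) := he ▸ by simp
  simp only [mem_insert, mem_singleton] at h₁ h₂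
  simp only [dirAt, Zigzag.dir]
  rcases h₁ with h₁ | h₁ <;> rcases h₂ with h₂ | h₂ <;> simp_all

noncomputable def partner (F : Finset V) (s : Σ _ : Fin τ.zigzags.length, ℤ) :
    Σ _ : Fin τ.zigzags.length, ℤ :=
  ⟨s.1, τ.zigzags[s.1].across F s.2 % τ.zigzags[s.1].length⟩

lemma e_partner (F : Finset V) (s : Σ _ : Fin τ.zigzags.length, ℤ) :
    τ.zigzags[(partner F s).1].e (partner F s).2 = τ.zigzags[s.1].e (τ.zigzags[s.1].across F s.2) :=
  τ.zigzags[s.1].e_periodic.map_emod _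

lemma dirAt_partner (F : Finset V) (s : Σ _ : Fin τ.zigzags.length, ℤ) :
    τ.dirAt (partner F s) = τ.zigzags[s.1].dir (τ.zigzags[s.1].across F s.2) :=
  τ.zigzags[s.1].dir_periodic.map_emod _

lemma e_partner_ne (F : Finset V) (s : Σ _ : Fin τ.zigzags.length, ℤ) :
    τ.zigzags[(partner F s).1].e (partner F s).2 ≠ τ.zigzags[s.1].e s.2 := by
  rw [e_partner]
  exact τ.zigzags[s.1].e_across_ne F s.2

section Partner

variable (hT : T.IsProper) {F : Finset V} (hF : F ∈ T.faces) {s : Σ _ : Fin τ.zigzags.length, ℤ}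
  (hs : s ∈ τ.occFace F)
include hT hF hs

lemma partner_mem_occFace : partner F s ∈ τ.occFace F := by
  have hL : (0 : ℤ) < τ.zigzags[s.1].length := by exact_mod_cast τ.zigzags[s.1].length_pos
  refine mem_occFace.mpr ⟨Int.emod_nonneg _ hL.ne', Int.emod_lt_of_pos _ hL, ?_⟩
  rw [e_partner]
  exact Zigzag.e_across_subset hT hF (mem_occFace.mp hs).2.2

lemma partner_partner : partner F (partner F s) = s := by
  obtain ⟨k, i⟩ := s
  obtain ⟨h0, hlt, he⟩ := mem_occFace.mp hs
  simp only [partner, Zigzag.across_emod _ hT, Zigzag.across_across hT hF he,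
    Int.emod_eq_of_lt h0 hlt]

lemma isCyclic_dirAt_partner {x y z : V} (hxy : x ≠ y) (hyz : y ≠ z) (hxz : x ≠ z)
    (hxyz : F = {x, y, z}) :
    IsCyclic x y z (τ.dirAt (partner F s)) ↔ IsCyclic x y z (τ.dirAt s) := by
  rw [dirAt_partner]
  exact Zigzag.isCyclic_dir_across hT hF (mem_occFace.mp hs).2.2 hxy hyz hxz hxyz

end Partner

variable {x y z : V}

lemma cyclicCount_rotate (x y z : V) : τ.cyclicCount y z x = τ.cyclicCount x y z := by
  ext p
  simp only [cyclicCount, isCyclic_rotate]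

lemma cyclicCount_le_two (x y z : V) {p : Finset V} (hp : p ∈ T.edges) :
    τ.cyclicCount x y z p ≤ 2 :=
  card_occ hp ▸ card_filter_le _ _

lemma cyclicCount_pos_iff {p : Finset V} :
    0 < τ.cyclicCount x y z p ↔ ∃ s ∈ τ.occ p, IsCyclic x y z (τ.dirAt s) := by
  rw [cyclicCount, card_pos, filter_nonempty_iff]

lemma cyclicCount_lt_two_iff {p : Finset V} (hp : p ∈ T.edges) :
    τ.cyclicCount x y z p < 2 ↔ ∃ s ∈ τ.occ p, ¬ IsCyclic x y z (τ.dirAt s) := by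
  rw [← not_iff_not, not_lt, not_exists]
  simp only [not_and, not_not]
  rw [← card_filter_eq_iff, ← card_occ hp, cyclicCount]
  exact ⟨fun h => le_antisymm (card_filter_le _ _) h, fun h => h.ge⟩

lemma isCyclic_dirAt_iff (hxy : x ≠ y) (hyz : y ≠ z) (hxz : x ≠ z)
    {s : Σ _ : Fin τ.zigzags.length, ℤ} (hs : s ∈ τ.occ {x, y}) :
    IsCyclic x y z (τ.dirAt s) ↔ τ.dirAt s = (x, y) := by
  rcases dirAt_eq_or_eq hs with h | h <;> simp [h, IsCyclic, hxy, hyz, hxz]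

lemma dirOf_of_cyclicCount_eq_two (hxy : x ≠ y) (hyz : y ≠ z) (hxz : x ≠ z)
    (hp : ({x, y} : Finset V) ∈ T.edges) (h : τ.cyclicCount x y z {x, y} = 2) :
    τ.dirOf {x, y} (x, y) := by
  rw [cyclicCount, ← card_occ hp, card_filter_eq_iff] at h
  exact dirOf_iff.mpr fun s hs => (isCyclic_dirAt_iff hxy hyz hxz hs).mp (h s hs)

lemma dirOf_of_cyclicCount_eq_zero (h : τ.cyclicCount x y z {x, y} = 0) :
    τ.dirOf {x, y} (y, x) := by
  rw [cyclicCount, card_filter_eq_zero_iff] at h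
  refine dirOf_iff.mpr fun s hs => (dirAt_eq_or_eq hs).resolve_left fun hs' => h s hs ?_
  exact hs' ▸ .inl rfl

lemma typeII_iff_cyclicCount (hxy : x ≠ y) (hyz : y ≠ z) (hxz : x ≠ z)
    (hp : ({x, y} : Finset V) ∈ T.edges) :
    τ.TypeII {x, y} ↔ τ.cyclicCount x y z {x, y} = 0 ∨ τ.cyclicCount x y z {x, y} = 2 := by
  refine ⟨fun ⟨d, hd⟩ => ?_, ?_⟩
  · have hd := dirOf_iff.mp hd
    obtain ⟨s₀, hs₀⟩ : (τ.occ {x, y}).Nonempty := card_pos.mp (by rw [card_occ hp]; norm_num)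
    rw [cyclicCount, card_filter_eq_zero_iff, ← card_occ hp, card_filter_eq_iff]
    have hdir : ∀ s ∈ τ.occ {x, y}, τ.dirAt s = τ.dirAt s₀ := fun s hs =>
      (hd s hs).trans (hd s₀ hs₀).symm
    rcases dirAt_eq_or_eq hs₀ with h | h
    · exact .inr fun s hs => (isCyclic_dirAt_iff hxy hyz hxz hs).mpr (h ▸ hdir s hs)
    · refine .inl fun s hs hc => hxy ?_
      have := ((isCyclic_dirAt_iff hxy hyz hxz hs).mp hc).symm.trans (h ▸ hdir s hs)
      exact (Prod.mk.inj this).1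
  · rintro (h | h)
    · exact ⟨_, dirOf_of_cyclicCount_eq_zero h⟩
    · exact ⟨_, dirOf_of_cyclicCount_eq_two hxy hyz hxz hp h⟩

lemma typeII_iff_cyclicCount_ne_one (hxy : x ≠ y) (hyz : y ≠ z) (hxz : x ≠ z)
    (hp : ({x, y} : Finset V) ∈ T.edges) :
    τ.TypeII {x, y} ↔ τ.cyclicCount x y z {x, y} ≠ 1 := by
  have := cyclicCount_le_two (τ := τ) x y z hp
  rw [typeII_iff_cyclicCount hxy hyz hxz hp]
  omega

lemma FaceTypeII.not_faceTypeI {f : Finset V} (h : τ.FaceTypeII f) : ¬ τ.FaceTypeI f := by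
  obtain ⟨x, y, z, rfl, hxy, hyz, hxz, hd₁, hd₂, -⟩ := h
  rintro ⟨p, -, hp⟩
  have h₁ := hp {x, y} ⟨mem_powersetCard.mpr ⟨by simp [insert_subset_iff], card_pair hxy⟩, _, hd₁⟩
  have h₂ := hp {y, z} ⟨mem_powersetCard.mpr ⟨by simp, card_pair hyz⟩, _, hd₂⟩
  exact pair_ne_pair hxy hxz (h₁.trans h₂.symm)

section Face

variable (hxy : x ≠ y) (hyz : y ≠ z) (hxz : x ≠ z) (hF : ({x, y, z} : Finset V) ∈ T.faces)
include hxy hyz hxz hF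

lemma even_cyclicCount_add (hT : T.IsProper) : Even (τ.cyclicCount x y z {x, y} +
    τ.cyclicCount x y z {y, z} + τ.cyclicCount x y z {z, x}) := by
  have hcard : τ.cyclicCount x y z {x, y} + τ.cyclicCount x y z {y, z} +
      τ.cyclicCount x y z {z, x} =
      ((τ.occFace {x, y, z}).filter fun s => IsCyclic x y z (τ.dirAt s)).card := by
    rw [occFace_triple, filter_union, filter_union, card_union_of_disjoint, card_union_of_disjoint]
    · rfl
    · exact (disjoint_occ (pair_ne_pair hxy hxz)).mono (filter_subset _ _) (filter_subset _ _)
    · rw [← filter_union]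
      exact (disjoint_union_left.mpr ⟨disjoint_occ (pair_ne_pair hxz.symm hyz.symm).symm,
        disjoint_occ (pair_ne_pair hyz hxy.symm)⟩).mono (filter_subset _ _) (filter_subset _ _)
  rw [hcard]
  refine even_card_of_involution (partner {x, y, z}) (fun s hs => ?_)
    (fun s hs => partner_partner hT hF (mem_filter.mp hs).1) (fun s _ h => ?_)
  · obtain ⟨hs, hc⟩ := mem_filter.mp hs
    exact mem_filter.mpr ⟨partner_mem_occFace hT hF hs,
      (isCyclic_dirAt_partner hT hF hs hxy hyz hxz rfl).mpr hc⟩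
  · exact e_partner_ne _ s (congrArg (fun t : Σ _ : Fin τ.zigzags.length, ℤ =>
      τ.zigzags[t.1].e t.2) h)

lemma exists_occ_other_edge (hT : T.IsProper) {s : Σ _ : Fin τ.zigzags.length, ℤ}
    (hs : s ∈ τ.occ {x, y}) :
    ∃ t, (t ∈ τ.occ {y, z} ∨ t ∈ τ.occ {z, x}) ∧
      (IsCyclic x y z (τ.dirAt t) ↔ IsCyclic x y z (τ.dirAt s)) := by
  have hs' : s ∈ τ.occFace {x, y, z} := by
    rw [occFace_triple]
    exact mem_union_left _ (mem_union_left _ hs)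
  refine ⟨partner {x, y, z} s, ?_, isCyclic_dirAt_partner hT hF hs' hxy hyz hxz rfl⟩
  have hmem := partner_mem_occFace hT hF hs'
  rw [occFace_triple, mem_union, mem_union] at hmem
  rcases hmem with (h | h) | h
  · exact absurd ((mem_occ.mp h).2.2.trans (mem_occ.mp hs).2.2.symm) (e_partner_ne _ s)
  · exact .inl h
  · exact .inr h

lemma cyclicCount_pos_of_pos (hT : T.IsProper) (h : 0 < τ.cyclicCount x y z {x, y}) :
    0 < τ.cyclicCount x y z {y, z} ∨ 0 < τ.cyclicCount x y z {z, x} := by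
  obtain ⟨s, hs, hc⟩ := cyclicCount_pos_iff.mp h
  obtain ⟨t, ht | ht, htc⟩ := exists_occ_other_edge hxy hyz hxz hF hT hs
  · exact .inl (cyclicCount_pos_iff.mpr ⟨t, ht, htc.mpr hc⟩)
  · exact .inr (cyclicCount_pos_iff.mpr ⟨t, ht, htc.mpr hc⟩)

lemma cyclicCount_lt_two_of_lt_two (hT : T.IsProper) (h : τ.cyclicCount x y z {x, y} < 2) :
    τ.cyclicCount x y z {y, z} < 2 ∨ τ.cyclicCount x y z {z, x} < 2 := by
  obtain ⟨s, hs, hc⟩ := (cyclicCount_lt_two_iff (pair_mem_edges hF hxy (by simp) (by simp))).mp h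
  obtain ⟨t, ht | ht, htc⟩ := exists_occ_other_edge hxy hyz hxz hF hT hs
  · exact .inl ((cyclicCount_lt_two_iff (pair_mem_edges hF hyz (by simp) (by simp))).mpr
      ⟨t, ht, mt htc.mp hc⟩)
  · exact .inr ((cyclicCount_lt_two_iff (pair_mem_edges hF hxz.symm (by simp) (by simp))).mpr
      ⟨t, ht, mt htc.mp hc⟩)

lemma faceTypeI_of_cyclicCount (ha : τ.cyclicCount x y z {x, y} ≠ 1)
    (hb : τ.cyclicCount x y z {y, z} = 1) (hc : τ.cyclicCount x y z {z, x} = 1) :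
    τ.FaceTypeI {x, y, z} := by
  refine ⟨{x, y}, ⟨mem_powersetCard.mpr ⟨by simp [insert_subset_iff], card_pair hxy⟩,
    (typeII_iff_cyclicCount_ne_one hxy hyz hxz
      (pair_mem_edges hF hxy (by simp) (by simp))).mpr ha⟩, ?_⟩
  rintro q ⟨hq, hII⟩
  obtain ⟨hqF, hq2⟩ := mem_powersetCard.mp hq
  rcases eq_or_eq_or_eq_of_subset_triple hqF hq2 with rfl | rfl | rfl
  · rfl
  · rw [typeII_iff_cyclicCount_ne_one hyz hxz.symm hxy.symm
      (pair_mem_edges hF hyz (by simp) (by simp)),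
      cyclicCount_rotate] at hII
    exact absurd hb hII
  · rw [typeII_iff_cyclicCount_ne_one hxz.symm hxy hyz.symm
      (pair_mem_edges hF hxz.symm (by simp) (by simp)),
      cyclicCount_rotate, cyclicCount_rotate] at hII
    exact absurd hc hII

lemma faceTypeII_of_cyclicCount_eq_two (ha : τ.cyclicCount x y z {x, y} = 2)
    (hb : τ.cyclicCount x y z {y, z} = 2) (hc : τ.cyclicCount x y z {z, x} = 2) :
    τ.FaceTypeII {x, y, z} := by
  refine ⟨x, y, z, rfl, hxy, hyz, hxz,
    dirOf_of_cyclicCount_eq_two hxy hyz hxz (pair_mem_edges hF hxy (by simp) (by simp)) ha,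
    dirOf_of_cyclicCount_eq_two hyz hxz.symm hxy.symm
      (pair_mem_edges hF hyz (by simp) (by simp)) ?_,
    dirOf_of_cyclicCount_eq_two hxz.symm hxy hyz.symm
      (pair_mem_edges hF hxz.symm (by simp) (by simp)) ?_⟩
  · rwa [cyclicCount_rotate]
  · rwa [cyclicCount_rotate, cyclicCount_rotate]

omit hF in
lemma faceTypeII_of_cyclicCount_eq_zero (ha : τ.cyclicCount x y z {x, y} = 0)
    (hb : τ.cyclicCount x y z {y, z} = 0) (hc : τ.cyclicCount x y z {z, x} = 0) :
    τ.FaceTypeII {x, y, z} := by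
  refine ⟨y, x, z, insert_comm _ _ _, hxy.symm, hxz, hyz, ?_, ?_, ?_⟩
  · rw [pair_comm]
    exact dirOf_of_cyclicCount_eq_zero ha
  · rw [pair_comm]
    exact dirOf_of_cyclicCount_eq_zero (z := y) (by rwa [cyclicCount_rotate, cyclicCount_rotate])
  · rw [pair_comm]
    exact dirOf_of_cyclicCount_eq_zero (z := x) (by rwa [cyclicCount_rotate])

variable (τ) in
theorem faceTypeI_or_faceTypeII (hT : T.IsProper) :
    τ.FaceTypeI {x, y, z} ∨ τ.FaceTypeII {x, y, z} := by
  have hF₁ : ({y, z, x} : Finset V) ∈ T.faces := triple_rotate x y z ▸ hF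
  have hF₂ : ({z, x, y} : Finset V) ∈ T.faces := triple_rotate y z x ▸ hF₁
  have hrot₁ := cyclicCount_rotate (τ := τ) x y z
  have hrot₂ := (cyclicCount_rotate (τ := τ) y z x).trans hrot₁
  have hle₀ := cyclicCount_le_two (τ := τ) x y z (pair_mem_edges hF hxy (by simp) (by simp))
  have hle₁ := cyclicCount_le_two (τ := τ) x y z (pair_mem_edges hF hyz (by simp) (by simp))
  have hle₂ := cyclicCount_le_two (τ := τ) x y z (pair_mem_edges hF hxz.symm (by simp) (by simp))
  have hpos₀ := cyclicCount_pos_of_pos (τ := τ) hxy hyz hxz hF hT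
  have hpos₁ := hrot₁ ▸ cyclicCount_pos_of_pos (τ := τ) hyz hxz.symm hxy.symm hF₁ hT
  have hpos₂ := hrot₂ ▸ cyclicCount_pos_of_pos (τ := τ) hxz.symm hxy hyz.symm hF₂ hT
  have hlt₀ := cyclicCount_lt_two_of_lt_two (τ := τ) hxy hyz hxz hF hT
  have hlt₁ := hrot₁ ▸ cyclicCount_lt_two_of_lt_two (τ := τ) hyz hxz.symm hxy.symm hF₁ hT
  have hlt₂ := hrot₂ ▸ cyclicCount_lt_two_of_lt_two (τ := τ) hxz.symm hxy hyz.symm hF₂ hT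
  obtain ⟨m, hm⟩ := even_cyclicCount_add (τ := τ) hxy hyz hxz hF hT
  set a := τ.cyclicCount x y z {x, y}
  set b := τ.cyclicCount x y z {y, z}
  set c := τ.cyclicCount x y z {z, x}
  rcases (by omega : (a = 2 ∧ b = 2 ∧ c = 2) ∨ (a = 0 ∧ b = 0 ∧ c = 0) ∨
      (a ≠ 1 ∧ b = 1 ∧ c = 1) ∨ (b ≠ 1 ∧ c = 1 ∧ a = 1) ∨ (c ≠ 1 ∧ a = 1 ∧ b = 1)) with
    ⟨ha, hb, hc⟩ | ⟨ha, hb, hc⟩ | ⟨ha, hb, hc⟩ | ⟨hb, hc, ha⟩ | ⟨hc, ha, hb⟩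
  · exact .inr (faceTypeII_of_cyclicCount_eq_two hxy hyz hxz hF ha hb hc)
  · exact .inr (faceTypeII_of_cyclicCount_eq_zero hxy hyz hxz ha hb hc)
  · exact .inl (faceTypeI_of_cyclicCount hxy hyz hxz hF ha hb hc)
  · refine .inl (triple_rotate x y z ▸ faceTypeI_of_cyclicCount hyz hxz.symm hxy.symm hF₁ ?_ ?_ ?_)
      <;> rwa [hrot₁]
  · refine .inl ((triple_rotate y z x).trans (triple_rotate x y z) ▸
      faceTypeI_of_cyclicCount hxz.symm hxy hyz.symm hF₂ ?_ ?_ ?_) <;> rwa [hrot₂]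

end Face

end ZOrientation

end Triangulation

/-- Given a fixed z-orientation of a triangulation, every face
satisfies exactly one of: (I) it has exactly two edges of type I and one edge
of type II, or (II) all three of its edges are of type II and their directions
form a directed 3-cycle around the face. -/
theorem stmt6 {V : Type} [DecidableEq V] (T : Triangulation V) (hT : T.IsProper)
    (τ : T.ZOrientation) :
    ∀ f ∈ T.faces, (τ.FaceTypeI f ∧ ¬ τ.FaceTypeII f) ∨
      (τ.FaceTypeII f ∧ ¬ τ.FaceTypeI f) := by
  intro f hf
  obtain ⟨x, y, z, hxy, hxz, hyz, rfl⟩ := card_eq_three.mp (hT.1 f hf)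
  rcases τ.faceTypeI_or_faceTypeII hxy hyz hxz hf hT with h | h
  · exact .inl ⟨h, fun h' => h'.not_faceTypeI h⟩
  · exact .inr ⟨h, h.not_faceTypeI⟩
end

section
/- A zigzag Z in a triangulation is never equal to its reversal: for every zigzag Z, Z ≠ Z^{-1}. -/
open Finset
open scoped Classical

/-!
A reflection `i ↦ k - i` of `ℤ` either fixes `k / 2` (for `k` even) or swaps the neighbours
`(k - 1) / 2` and `(k + 1) / 2` (for `k` odd). In the first case it swaps two edges at distance two,
which are disjoint and hence distinct; in the second it swaps two consecutive edges, which are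
distinct by definition.
-/

namespace Triangulation

variable {V : Type} [DecidableEq V] {T : Triangulation V}

theorem card_eq_two_of_mem_edges_s7 {e : Finset V} (he : e ∈ T.edges) : e.card = 2 := by
  obtain ⟨f, -, hf⟩ := Finset.mem_biUnion.mp he
  exact (Finset.mem_powersetCard.mp hf).2

theorem Zigzag.e_ne_e_add_two (Z : T.Zigzag) (i : ℤ) : Z.e i ≠ Z.e (i + 2) := by
  intro h
  have hne : (Z.e i).Nonempty := by
    rw [← Finset.card_pos, card_eq_two_of_mem_edges_s7 (Z.e_mem i)]
    norm_num
  exact hne.ne_empty (disjoint_self.mp (h ▸ Z.disj i))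

end Triangulation

theorem stmt7_general {V : Type} [DecidableEq V] (T : Triangulation V)
    (Z : T.Zigzag) :
    ¬ ∃ k : ℤ, ∀ i : ℤ, Z.e i = Z.e (k - i) := by
  rintro ⟨k, hk⟩
  rcases Int.even_or_odd k with ⟨m, rfl⟩ | ⟨m, rfl⟩
  · refine Z.e_ne_e_add_two (m - 1) ?_
    rw [hk (m - 1)]
    congr 1
    ring
  · refine Z.edges_ne m ?_
    rw [hk m]
    congr 1
    ring

/-- A zigzag `Z` in a triangulation is never equal (as a cyclic
sequence, i.e. up to rotation) to its reversal: `Z ≠ Z⁻¹`. -/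
theorem stmt7 {V : Type} [DecidableEq V] (T : Triangulation V) (hT : T.IsProper)
    (Z : T.Zigzag) :
    ¬ ∃ k : ℤ, ∀ i : ℤ, Z.e i = Z.e (k - i) :=
  stmt7_general T Z
end
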